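/- arXiv:1212.6567 — 3 statements merged into one kernel-verified Lean document; each statement's English description precedes it below -/
import Mathlib

section
/- Let G be an interval graph and let 𝓘 = (I_v)_{v ∈ V(G)} be a minimal interval representation of G. Then: (1) for every k ∈ ℕ for which M(k) := {v ∈ V(G) : k ∈ I_v} is non-empty, M(k) is a max clique of G; and (2) for every max clique M of G there is a k ∈ ℕ with M = M(k). -/
/-- `lo, hi` is an interval representation of the (finite simple) graph `G`: each
vertex `v` is assigned the closed interval `[lo v, hi v] ⊆ ℕ`, and distinct vertices
are adjacent iff their intervals intersect. -/
def IsIntervalRep {V : Type} (G : SimpleGraph V) (lo hi : V → ℕ) : Prop :=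
  (∀ v : V, lo v ≤ hi v) ∧
  ∀ u v : V, u ≠ v →
    (G.Adj u v ↔ (Set.Icc (lo u) (hi u) ∩ Set.Icc (lo v) (hi v)).Nonempty)

/-- A graph is an interval graph if it has an interval representation. -/
def IsIntervalGraph {V : Type} (G : SimpleGraph V) : Prop :=
  ∃ lo hi : V → ℕ, IsIntervalRep G lo hi

/-- A max clique: an inclusion-maximal clique. -/
def IsMaxClique {V : Type} (G : SimpleGraph V) (s : Set V) : Prop :=
  G.IsClique s ∧ ∀ t : Set V, G.IsClique t → s ⊆ t → t = s

/-- A minimal interval representation: one for which the number of points of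
`⋃_v I_v ⊆ ℕ` is minimum among all interval representations of `G`. -/
def IsMinimalRep {V : Type} (G : SimpleGraph V) (lo hi : V → ℕ) : Prop :=
  IsIntervalRep G lo hi ∧
  ∀ lo' hi' : V → ℕ, IsIntervalRep G lo' hi' →
    (⋃ v : V, Set.Icc (lo v) (hi v)).ncard ≤ (⋃ v : V, Set.Icc (lo' v) (hi' v)).ncard

/-!
Every interval representation satisfies the Helly property: a finite clique lies in
`M(k)` for the largest left endpoint `k` of its members' intervals, so each max
clique is some `M(k)`. Conversely, if `M(k) ≠ ∅` were not maximal, it would lie in a max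
clique `M(k')` with `k' ≠ k`; then every interval through `k` also passes through the
neighbour `j` of `k` towards `k'`, and collapsing the adjacent points `k` and `j` of `ℕ`
gives an interval representation of `G` using one point fewer.
-/

open Set

/-- The set `M(k)` of the paper. -/
def pointSet {V : Type} (lo hi : V → ℕ) (k : ℕ) : Set V := {v | k ∈ Icc (lo v) (hi v)}

lemma isMaxClique_iff_maximal {V : Type} {G : SimpleGraph V} {s : Set V} :
    IsMaxClique G s ↔ Maximal G.IsClique s :=
  ⟨fun h => ⟨h.1, fun t ht hst => (h.2 t ht hst).le⟩,
    fun h => ⟨h.1, fun _ ht hst => (h.2 ht hst).antisymm hst⟩⟩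

lemma exists_isMaxClique_superset {V : Type} [Finite V] {G : SimpleGraph V} {s : Set V}
    (hs : G.IsClique s) : ∃ M, IsMaxClique G M ∧ s ⊆ M := by
  obtain ⟨M, hsM, hM⟩ := Finite.exists_le_maximal hs
  exact ⟨M, isMaxClique_iff_maximal.2 hM, hsM⟩

lemma pointSet_inter_subset {V : Type} (lo hi : V → ℕ) {a b j : ℕ} (haj : a ≤ j)
    (hjb : j ≤ b) : pointSet lo hi a ∩ pointSet lo hi b ⊆ pointSet lo hi j := by
  rintro v ⟨⟨ha, -⟩, -, hb⟩
  exact ⟨ha.trans haj, hjb.trans hb⟩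

section IntervalRep

variable {V : Type} {G : SimpleGraph V} {lo hi : V → ℕ}

lemma IsIntervalRep.isClique_pointSet (hrep : IsIntervalRep G lo hi) (k : ℕ) :
    G.IsClique (pointSet lo hi k) :=
  fun u hu v hv huv => (hrep.2 u v huv).2 ⟨k, hu, hv⟩

lemma IsIntervalRep.exists_subset_pointSet (hrep : IsIntervalRep G lo hi) {s : Set V}
    (hs : G.IsClique s) (hfin : s.Finite) : ∃ k, s ⊆ pointSet lo hi k := by
  rcases s.eq_empty_or_nonempty with rfl | hne
  · exact ⟨0, empty_subset _⟩
  obtain ⟨w, hw, hmax⟩ := exists_max_image s lo hfin hne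
  refine ⟨lo w, fun v hv => ⟨hmax v hv, ?_⟩⟩
  obtain rfl | hvw := eq_or_ne v w
  · exact hrep.1 v
  obtain ⟨x, ⟨hwx, -⟩, -, hxv⟩ := (hrep.2 w v hvw.symm).1 (hs hw hv hvw.symm)
  exact hwx.trans hxv

lemma IsIntervalRep.exists_eq_pointSet [Finite V] (hrep : IsIntervalRep G lo hi) {M : Set V}
    (hM : IsMaxClique G M) : ∃ k, M = pointSet lo hi k := by
  obtain ⟨k, hk⟩ := hrep.exists_subset_pointSet hM.1 M.toFinite
  exact ⟨k, (hM.2 _ (hrep.isClique_pointSet k) hk).symm⟩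

end IntervalRep

def collapse (m x : ℕ) : ℕ := if x ≤ m then x else x - 1

lemma collapse_mono (m : ℕ) : Monotone (collapse m) := by
  intro x y hxy
  simp only [collapse]
  split_ifs <;> omega

lemma eq_or_of_collapse_eq {m x y : ℕ} (h : collapse m x = collapse m y) :
    x = y ∨ (x = m ∧ y = m + 1) ∨ (x = m + 1 ∧ y = m) := by
  simp only [collapse] at h
  split_ifs at h <;> omega

lemma image_collapse_Icc (m : ℕ) {a b : ℕ} (hab : a ≤ b) :
    collapse m '' Icc a b = Icc (collapse m a) (collapse m b) := by
  refine (collapse_mono m).image_Icc_subset.antisymm fun y ⟨hay, hyb⟩ => ?_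
  refine ⟨if y ≤ m ∧ a ≤ y then y else y + 1, ?_, ?_⟩
  all_goals simp only [collapse, mem_Icc] at hay hyb ⊢; split_ifs at * <;> omega

lemma ncard_image_collapse_lt {m : ℕ} {U : Set ℕ} (hU : U.Finite) (hm : m ∈ U)
    (hm1 : m + 1 ∈ U) : (collapse m '' U).ncard < U.ncard := by
  refine (ncard_image_le hU).lt_of_ne fun h => ?_
  have := injOn_of_ncard_image_eq h hU hm1 hm (by simp [collapse])
  omega

section Collapse

variable {V : Type} {G : SimpleGraph V} {lo hi : V → ℕ} {m : ℕ}

/-- Any two intervals through `m` and `m + 1` share one of these points, so collapsing them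
creates no adjacency. -/
lemma IsIntervalRep.comp_collapse (hrep : IsIntervalRep G lo hi)
    (hcmp : pointSet lo hi m ⊆ pointSet lo hi (m + 1) ∨
      pointSet lo hi (m + 1) ⊆ pointSet lo hi m) :
    IsIntervalRep G (collapse m ∘ lo) (collapse m ∘ hi) := by
  have cross : ∀ u v, m ∈ Icc (lo u) (hi u) → m + 1 ∈ Icc (lo v) (hi v) →
      (Icc (lo u) (hi u) ∩ Icc (lo v) (hi v)).Nonempty := by
    intro u v hu hv
    rcases hcmp with h | h
    · exact ⟨m + 1, h hu, hv⟩
    · exact ⟨m, hu, h hv⟩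
  refine ⟨fun v => collapse_mono m (hrep.1 v), fun u v huv => ?_⟩
  simp only [Function.comp_apply, ← image_collapse_Icc m (hrep.1 _), hrep.2 u v huv]
  refine ⟨fun h => (h.image _).mono (image_inter_subset _ _ _), ?_⟩
  rintro ⟨_, ⟨x, hx, rfl⟩, y, hy, hxy⟩
  rcases eq_or_of_collapse_eq hxy with rfl | ⟨rfl, rfl⟩ | ⟨rfl, rfl⟩
  · exact ⟨y, hx, hy⟩
  · exact inter_comm _ _ ▸ cross v u hy hx
  · exact cross u v hx hy

lemma iUnion_Icc_collapse (hle : ∀ v, lo v ≤ hi v) :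
    ⋃ v, Icc ((collapse m ∘ lo) v) ((collapse m ∘ hi) v) =
      collapse m '' ⋃ v, Icc (lo v) (hi v) := by
  simp only [image_iUnion, Function.comp_apply, image_collapse_Icc m (hle _)]

lemma IsMinimalRep.not_pointSet_succ_comparable [Finite V] (hmin : IsMinimalRep G lo hi)
    (hm : (pointSet lo hi m).Nonempty) (hm1 : (pointSet lo hi (m + 1)).Nonempty) :
    ¬ (pointSet lo hi m ⊆ pointSet lo hi (m + 1) ∨ pointSet lo hi (m + 1) ⊆ pointSet lo hi m) := by
  intro hcmp
  obtain ⟨u, hu⟩ := hm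
  obtain ⟨v, hv⟩ := hm1
  have hlt := ncard_image_collapse_lt (finite_iUnion fun v => finite_Icc (lo v) (hi v))
    (mem_iUnion.2 ⟨u, hu⟩) (mem_iUnion.2 ⟨v, hv⟩)
  have hle := hmin.2 _ _ (hmin.1.comp_collapse hcmp)
  rw [iUnion_Icc_collapse hmin.1.1] at hle
  omega

lemma IsMinimalRep.eq_of_pointSet_subset [Finite V] (hmin : IsMinimalRep G lo hi) {k k' : ℕ}
    (hne : (pointSet lo hi k).Nonempty) (hsub : pointSet lo hi k ⊆ pointSet lo hi k') :
    k = k' := by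
  by_contra hkk'
  rcases Nat.lt_or_gt_of_ne hkk' with hlt | hlt
  · have h : pointSet lo hi k ⊆ pointSet lo hi (k + 1) :=
      fun v hv => pointSet_inter_subset lo hi k.le_succ hlt ⟨hv, hsub hv⟩
    exact hmin.not_pointSet_succ_comparable hne (hne.mono h) (Or.inl h)
  · obtain ⟨j, rfl⟩ : ∃ j, k = j + 1 := ⟨k - 1, by omega⟩
    have h : pointSet lo hi (j + 1) ⊆ pointSet lo hi j :=
      fun v hv => pointSet_inter_subset lo hi (Nat.le_of_lt_succ hlt) j.le_succ ⟨hsub hv, hv⟩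
    exact hmin.not_pointSet_succ_comparable (hne.mono h) hne (Or.inr h)

end Collapse

/-- Let `lo, hi` be a minimal interval representation of the
interval graph `G`.  Then (1) for every `k ∈ ℕ` for which
`M(k) := {v : k ∈ I_v}` is non-empty, `M(k)` is a max clique of `G`; and (2) every
max clique of `G` is of the form `M(k)` for some `k ∈ ℕ`. -/
theorem minimalRep_maxCliques {V : Type} [Fintype V] (G : SimpleGraph V)
    (lo hi : V → ℕ) (hmin : IsMinimalRep G lo hi) :
    (∀ k : ℕ, {v : V | k ∈ Set.Icc (lo v) (hi v)}.Nonempty →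
      IsMaxClique G {v : V | k ∈ Set.Icc (lo v) (hi v)}) ∧
    (∀ M : Set V, IsMaxClique G M →
      ∃ k : ℕ, M = {v : V | k ∈ Set.Icc (lo v) (hi v)}) := by
  refine ⟨fun k hk => ⟨hmin.1.isClique_pointSet k, fun t ht hkt => ?_⟩,
    fun M hM => hmin.1.exists_eq_pointSet hM⟩
  obtain ⟨M, hM, htM⟩ := exists_isMaxClique_superset ht
  obtain ⟨k', rfl⟩ := hmin.1.exists_eq_pointSet hM
  obtain rfl := hmin.eq_of_pointSet_subset hk (hkt.trans htM)
  exact htM.antisymm hkt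
end

section
/- Let G be an interval graph whose complement graph G^c is disconnected. Then at most one connected component of G^c contains more than one vertex; consequently, every vertex forming a singleton connected component of G^c is an apex of G, i.e. is adjacent in G to all other vertices. -/
lemma exists_adj_of_reachable {V : Type} {H : SimpleGraph V} {u v : V}
    (h : H.Reachable u v) (hne : u ≠ v) : ∃ w, H.Adj u w := by
  obtain ⟨p⟩ := h
  cases p with
  | nil => exact absurd rfl hne
  | cons h _ => exact ⟨_, h⟩

/-- Let `G` be an interval graph whose complement `Gᶜ` is
disconnected.  Then at most one connected component of `Gᶜ` contains more than one
vertex, and every vertex forming a singleton connected component of `Gᶜ` is an apex of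
`G`, i.e. adjacent in `G` to all other vertices. -/
theorem compl_disconnected_apex {V : Type} [Fintype V] [Nonempty V]
    (G : SimpleGraph V) (hG : IsIntervalGraph G)
    (hdisc : ¬ (Gᶜ).Preconnected) :
    (∀ c d : (Gᶜ).ConnectedComponent,
        1 < Nat.card {v : V // (Gᶜ).connectedComponentMk v = c} →
        1 < Nat.card {v : V // (Gᶜ).connectedComponentMk v = d} → c = d) ∧
    (∀ v : V,
        (∀ u : V, (Gᶜ).connectedComponentMk u = (Gᶜ).connectedComponentMk v → u = v) →
        ∀ u : V, u ≠ v → G.Adj v u) := by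
  obtain ⟨lo, hi, hlohi, hadj⟩ := hG
  have key : ∀ u v : V, u ≠ v → G.Adj u v → lo v ≤ hi u ∧ lo u ≤ hi v := by
    intro u v huv h
    obtain ⟨p, hp⟩ := (hadj u v huv).mp h
    simp only [Set.mem_inter_iff, Set.mem_Icc] at hp
    omega
  have key2 : ∀ u v : V, u ≠ v → ¬ G.Adj u v → hi u < lo v ∨ hi v < lo u := by
    intro u v huv h
    by_contra hc
    push_neg at hc
    have hu' := hlohi u
    have hv' := hlohi v
    rcases le_total (lo u) (lo v) with h' | h'
    · exact h ((hadj u v huv).mpr ⟨lo v, ⟨h', by omega⟩, ⟨le_rfl, by omega⟩⟩)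
    · exact h ((hadj u v huv).mpr ⟨lo u, ⟨le_rfl, by omega⟩, ⟨h', by omega⟩⟩)
  constructor
  · intro c d hc hd
    by_contra hcd
    rw [Finite.one_lt_card_iff_nontrivial] at hc hd
    obtain ⟨⟨u1, hu1⟩, ⟨u2, hu2⟩, hu⟩ := hc
    obtain ⟨⟨x1, hx1⟩, ⟨x2, hx2⟩, hx⟩ := hd
    have hu12 : u1 ≠ u2 := fun h => hu (by simp [h])
    have hx12 : x1 ≠ x2 := fun h => hx (by simp [h])
    obtain ⟨b, hab⟩ := exists_adj_of_reachable
      (SimpleGraph.ConnectedComponent.exact (hu1.trans hu2.symm)) hu12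
    obtain ⟨y, hxy⟩ := exists_adj_of_reachable
      (SimpleGraph.ConnectedComponent.exact (hx1.trans hx2.symm)) hx12
    have hb : (Gᶜ).connectedComponentMk b = c :=
      (SimpleGraph.ConnectedComponent.sound hab.symm.reachable).trans hu1
    have hy : (Gᶜ).connectedComponentMk y = d :=
      (SimpleGraph.ConnectedComponent.sound hxy.symm.reachable).trans hx1
    -- cross pairs are in different components, hence distinct and G-adjacent
    have cross : ∀ p q : V, (Gᶜ).connectedComponentMk p = c →
        (Gᶜ).connectedComponentMk q = d → p ≠ q ∧ G.Adj p q := by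
      intro p q hp hq
      have hpq : p ≠ q := fun h => hcd (hp ▸ hq ▸ (by rw [h]))
      refine ⟨hpq, ?_⟩
      by_contra hA
      have : (Gᶜ).Adj p q := (SimpleGraph.compl_adj _ _ _).mpr ⟨hpq, hA⟩
      exact hcd ((hp.symm.trans (SimpleGraph.ConnectedComponent.sound this.reachable)).trans hq)
    obtain ⟨h1, h1a⟩ := cross u1 x1 hu1 hx1
    obtain ⟨h2, h2a⟩ := cross u1 y hu1 hy
    obtain ⟨h3, h3a⟩ := cross b x1 hb hx1
    obtain ⟨h4, h4a⟩ := cross b y hb hy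
    obtain ⟨hne1, hnadj1⟩ := (SimpleGraph.compl_adj _ _ _).mp hab
    obtain ⟨hne2, hnadj2⟩ := (SimpleGraph.compl_adj _ _ _).mp hxy
    have k1 := key u1 x1 h1 h1a
    have k2 := key u1 y h2 h2a
    have k3 := key b x1 h3 h3a
    have k4 := key b y h4 h4a
    have d1 := key2 u1 b hne1 hnadj1
    have d2 := key2 x1 y hne2 hnadj2
    omega
  · intro v hv u hu
    have h1 : ¬ (Gᶜ).Adj v u := fun h =>
      hu (hv u (SimpleGraph.ConnectedComponent.sound h.symm.reachable))
    by_contra hA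
    exact h1 ((SimpleGraph.compl_adj _ _ _).mpr ⟨fun h => hu h.symm, hA⟩)
end

section
/- Let G be a connected interval graph without an apex, let M be a max clique of G, and let 𝒞 ⊆ M_G be a set of max cliques with M ∉ 𝒞 such that for every B ∈ M_G∖𝒞 and all C,C' ∈ 𝒞 it holds that B ∩ C = B ∩ C'. Then the max cliques in 𝒞 are mutually incomparable with respect to ≺_M, i.e. for all C,C' ∈ 𝒞 it is not the case that C ≺_M C'. -/
/-- An apex of a graph: a vertex adjacent to all other vertices. -/
def HasApex {V : Type} (G : SimpleGraph V) : Prop :=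
  ∃ v : V, ∀ u : V, u ≠ v → G.Adj v u

/-- `≺_M`: the smallest binary relation on the max cliques of `G` such that
(i) `M ≺_M C` for every max clique `C ≠ M`;
(ii) `C ≺_M D` whenever `C` is a max clique and there is `E` with `E ≺_M D` and
`(E ∩ C) ∖ D ≠ ∅`; and
(iii) `C ≺_M D` whenever `D` is a max clique and there is `E` with `C ≺_M E` and
`(E ∩ D) ∖ C ≠ ∅`. -/
inductive PrecM {V : Type} (G : SimpleGraph V) (M : Set V) : Set V → Set V → Prop
  | init (C : Set V) : IsMaxClique G C → C ≠ M → PrecM G M M C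
  | ext_left (C D E : Set V) : IsMaxClique G C → PrecM G M E D →
      ((E ∩ C) \ D).Nonempty → PrecM G M C D
  | ext_right (C D E : Set V) : IsMaxClique G D → PrecM G M C E →
      ((E ∩ D) \ C).Nonempty → PrecM G M C D

/-- Let `G` be a connected interval graph without an apex, `M` a max
clique of `G`, and `𝒞` a set of max cliques with `M ∉ 𝒞` such that for every max
clique `B ∉ 𝒞` and all `C, C' ∈ 𝒞` we have `B ∩ C = B ∩ C'`.  Then the max cliques
in `𝒞` are mutually incomparable with respect to `≺_M`. -/
theorem module_cliques_incomparable {V : Type} [Fintype V] (G : SimpleGraph V)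
    (hG : IsIntervalGraph G) (hconn : G.Connected) (hapex : ¬ HasApex G)
    (M : Set V) (hM : IsMaxClique G M)
    (𝒞 : Set (Set V)) (h𝒞 : ∀ C ∈ 𝒞, IsMaxClique G C) (hM𝒞 : M ∉ 𝒞)
    (hinter : ∀ B : Set V, IsMaxClique G B → B ∉ 𝒞 →
      ∀ C ∈ 𝒞, ∀ C' ∈ 𝒞, B ∩ C = B ∩ C') :
    ∀ C ∈ 𝒞, ∀ C' ∈ 𝒞, ¬ PrecM G M C C' := by
  intro C hC C' hC' hprec
  have key : ∀ A B : Set V, PrecM G M A B →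
      IsMaxClique G A ∧ IsMaxClique G B ∧ ¬(A ∈ 𝒞 ∧ B ∈ 𝒞) := by
    intro A B h
    induction h with
    | init C hCmax hne => exact ⟨hM, hCmax, fun h1 => hM𝒞 h1.1⟩
    | ext_left C D E hCmax hED hne ih =>
        refine ⟨hCmax, ih.2.1, ?_⟩
        rintro ⟨hC𝒞, hD𝒞⟩
        have hE𝒞 : E ∉ 𝒞 := fun hE => ih.2.2 ⟨hE, hD𝒞⟩
        have heq := hinter E ih.1 hE𝒞 C hC𝒞 D hD𝒞
        obtain ⟨x, ⟨hxE, hxC⟩, hxD⟩ := hne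
        exact hxD ((heq ▸ (Set.mem_inter hxE hxC : x ∈ E ∩ C)) : x ∈ E ∩ D).2
    | ext_right C D E hDmax hCE hne ih =>
        refine ⟨ih.1, hDmax, ?_⟩
        rintro ⟨hC𝒞, hD𝒞⟩
        have hE𝒞 : E ∉ 𝒞 := fun hE => ih.2.2 ⟨hC𝒞, hE⟩
        have heq := hinter E ih.2.1 hE𝒞 D hD𝒞 C hC𝒞
        obtain ⟨x, ⟨hxE, hxD⟩, hxC⟩ := hne
        exact hxC ((heq ▸ (Set.mem_inter hxE hxD : x ∈ E ∩ D)) : x ∈ E ∩ C).2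
  exact (key C C' hprec).2.2 ⟨hC, hC'⟩
end
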